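/- arXiv:1302.2639 — 4 statements merged into one kernel-verified Lean document; each statement's English description precedes it below -/
import Mathlib

section
/- Let F be a field, A ∈ F^n⊗F^m a tensor, and let u_1⊗v_1,…,u_s⊗v_s ∈ F^n⊗F^m be pure tensors (u_k ∈ F^n, v_k ∈ F^m) spanning a subspace U. Define Â = A⊗e_{s+1} + Σ_{k=1}^s u_k⊗v_k⊗e_k ∈ F^n⊗F^m⊗F^{s+1}. Then rank(Â) ≤ rank(A,U) + s, where rank(A,U) = min{rank(B) : B ∈ A+U} and rank denotes tensor rank. -/
open TensorProduct

/-- The tensor rank of a second-order tensor `T ∈ Fⁿ ⊗ Fᵐ`: the smallest number of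
pure tensors `x ⊗ y` summing to `T`. -/
noncomputable def tensorRank2 {F : Type*} [Field F] {n m : ℕ}
    (T : (Fin n → F) ⊗[F] (Fin m → F)) : ℕ :=
  sInf {r : ℕ | ∃ (x : Fin r → Fin n → F) (y : Fin r → Fin m → F),
    T = ∑ i : Fin r, x i ⊗ₜ[F] y i}

/-- The tensor rank of a third-order tensor `T ∈ Fⁿ ⊗ Fᵐ ⊗ Fᵖ`: the smallest number of
pure tensors `x ⊗ y ⊗ z` summing to `T`. -/
noncomputable def tensorRank3 {F : Type*} [Field F] {n m p : ℕ}
    (T : ((Fin n → F) ⊗[F] (Fin m → F)) ⊗[F] (Fin p → F)) : ℕ :=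
  sInf {r : ℕ | ∃ (x : Fin r → Fin n → F) (y : Fin r → Fin m → F) (z : Fin r → Fin p → F),
    T = ∑ i : Fin r, (x i ⊗ₜ[F] y i) ⊗ₜ[F] z i}

/-- `rank(A, U) = min { rank B | B ∈ A + U }`. -/
noncomputable def rankAU {F : Type*} [Field F] {n m : ℕ}
    (A : (Fin n → F) ⊗[F] (Fin m → F))
    (U : Submodule F ((Fin n → F) ⊗[F] (Fin m → F))) : ℕ :=
  sInf {r : ℕ | ∃ u ∈ U, tensorRank2 (A + u) = r}

/-!
Choose `B = A + u₀` with `u₀ = ∑ cₖ uₖ ⊗ vₖ ∈ U` of minimal rank `rank(A, U)`. Moving the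
coefficients `cₖ` into the third factor gives
`Â = B ⊗ e_{s+1} + ∑ₖ uₖ ⊗ vₖ ⊗ (eₖ - cₖ e_{s+1})`,
a sum of `rank B + s` pure tensors.
-/

theorem TensorProduct.exists_fin_sum_tmul_eq {R M N : Type*} [CommSemiring R]
    [AddCommMonoid M] [AddCommMonoid N] [Module R M] [Module R N] (t : M ⊗[R] N) :
    ∃ (r : ℕ) (x : Fin r → M) (y : Fin r → N), t = ∑ i, x i ⊗ₜ[R] y i := by
  induction t with
  | zero => exact ⟨0, ![], ![], by simp⟩
  | tmul a b => exact ⟨1, ![a], ![b], by simp⟩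
  | add t₁ t₂ h₁ h₂ =>
    obtain ⟨r₁, x₁, y₁, rfl⟩ := h₁
    obtain ⟨r₂, x₂, y₂, rfl⟩ := h₂
    exact ⟨r₁ + r₂, Fin.addCases x₁ x₂, Fin.addCases y₁ y₂, by simp [Fin.sum_univ_add]⟩

theorem TensorProduct.tmul_add_sum_tmul_eq {R M N ι : Type*} [CommRing R]
    [AddCommGroup M] [AddCommGroup N] [Module R M] [Module R N] [Fintype ι]
    (a : M) (e : N) (w : ι → M) (f : ι → N) (c : ι → R) :
    a ⊗ₜ[R] e + ∑ k, w k ⊗ₜ[R] f k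
      = (a + ∑ k, c k • w k) ⊗ₜ[R] e + ∑ k, w k ⊗ₜ[R] (f k - c k • e) := by
  simp only [add_tmul, sum_tmul, smul_tmul, tmul_sub, Finset.sum_sub_distrib]
  abel

section TensorRank

variable {F : Type*} [Field F] {n m : ℕ}

theorem exists_eq_sum_tmul_tensorRank2 (T : (Fin n → F) ⊗[F] (Fin m → F)) :
    ∃ (x : Fin (tensorRank2 T) → Fin n → F) (y : Fin (tensorRank2 T) → Fin m → F),
      T = ∑ i, x i ⊗ₜ[F] y i :=
  Nat.sInf_mem (TensorProduct.exists_fin_sum_tmul_eq T)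

theorem tensorRank3_tmul_add_sum_le {p s : ℕ} (B : (Fin n → F) ⊗[F] (Fin m → F))
    (e : Fin p → F) (x : Fin s → Fin n → F) (y : Fin s → Fin m → F) (z : Fin s → Fin p → F) :
    tensorRank3 (B ⊗ₜ[F] e + ∑ k, (x k ⊗ₜ[F] y k) ⊗ₜ[F] z k) ≤ tensorRank2 B + s := by
  obtain ⟨a, b, hB⟩ := exists_eq_sum_tmul_tensorRank2 B
  refine Nat.sInf_le ⟨Fin.addCases a x, Fin.addCases b y, Fin.addCases (fun _ => e) z, ?_⟩
  simp [Fin.sum_univ_add, hB, sum_tmul]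

theorem exists_mem_tensorRank2_add_eq_rankAU (A : (Fin n → F) ⊗[F] (Fin m → F))
    (U : Submodule F ((Fin n → F) ⊗[F] (Fin m → F))) :
    ∃ u ∈ U, tensorRank2 (A + u) = rankAU A U :=
  Nat.sInf_mem (s := {r | ∃ u ∈ U, tensorRank2 (A + u) = r})
    ⟨_, 0, U.zero_mem, rfl⟩

end TensorRank

/-- `rank(Â) ≤ rank(A,U) + s`. -/
theorem tensorRank_hat_le {F : Type*} [Field F] {n m s : ℕ}
    (A : (Fin n → F) ⊗[F] (Fin m → F))
    (u : Fin s → Fin n → F) (v : Fin s → Fin m → F)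
    (U : Submodule F ((Fin n → F) ⊗[F] (Fin m → F)))
    (hU : U = Submodule.span F (Set.range fun k : Fin s => u k ⊗ₜ[F] v k)) :
    tensorRank3
      (A ⊗ₜ[F] (Pi.single (Fin.last s) 1 : Fin (s + 1) → F)
        + ∑ k : Fin s, (u k ⊗ₜ[F] v k) ⊗ₜ[F]
            (Pi.single (Fin.castSucc k) 1 : Fin (s + 1) → F))
      ≤ rankAU A U + s := by
  obtain ⟨u₀, hu₀, hrank⟩ := exists_mem_tensorRank2_add_eq_rankAU A U
  rw [hU] at hu₀
  obtain ⟨c, rfl⟩ := (Submodule.mem_span_range_iff_exists_fun F).mp hu₀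
  rw [tmul_add_sum_tmul_eq _ _ _ _ c, ← hrank]
  exact tensorRank3_tmul_add_sum_le _ _ u v _
end

section
/- Let F be a field, A ∈ F^n⊗F^m a tensor, and let u_1⊗v_1,…,u_s⊗v_s ∈ F^n⊗F^m be linearly independent pure tensors spanning a subspace U. Define Â = A⊗e_{s+1} + Σ_{k=1}^s u_k⊗v_k⊗e_k ∈ F^n⊗F^m⊗F^{s+1}. Then rank(A,U) + s ≤ rank(Â), where rank(A,U) = min{rank(B) : B ∈ A+U} and rank denotes tensor rank. -/
open TensorProduct

/-!
Contracting a decomposition `Â = ∑ᵢ (xᵢ ⊗ yᵢ) ⊗ zᵢ` of length `r` with a functional `φ` on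
`F^{s+1}` gives `φ(e_{s+1}) A + ∑ₖ φ(eₖ) uₖ ⊗ vₖ = ∑ᵢ φ(zᵢ) xᵢ ⊗ yᵢ`. Linear independence of the
`uₖ ⊗ vₖ` forces the first `s` coordinates of the `zᵢ` to span `F^s`, so `s` of them form a basis.
Hence some `φ` with `φ(e_{s+1}) = 1` vanishes on the corresponding `s` vectors `zᵢ`, and
contracting with it writes an element of `A + U` as a sum of `r - s` pure tensors.
-/

lemma TensorProduct.exists_sum_tmul_tmul_eq {R M N P : Type*} [CommSemiring R]
    [AddCommMonoid M] [Module R M] [AddCommMonoid N] [Module R N]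
    [AddCommMonoid P] [Module R P] (T : (M ⊗[R] N) ⊗[R] P) :
    ∃ (k : ℕ) (x : Fin k → M) (y : Fin k → N) (z : Fin k → P),
      T = ∑ j, (x j ⊗ₜ y j) ⊗ₜ z j := by
  induction T with
  | zero => exact ⟨0, finZeroElim, finZeroElim, finZeroElim, by simp⟩
  | tmul a c =>
    obtain ⟨k, x, y, rfl⟩ := exists_sum_tmul_eq a
    exact ⟨k, x, y, fun _ ↦ c, sum_tmul _ _ _⟩
  | add S T hS hT =>
    obtain ⟨kS, xS, yS, zS, rfl⟩ := hS
    obtain ⟨kT, xT, yT, zT, rfl⟩ := hT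
    exact ⟨kS + kT, Fin.addCases xS xT, Fin.addCases yS yT, Fin.addCases zS zT,
      by simp [Fin.sum_univ_add]⟩

section

variable {F : Type*} [Field F]

lemma exists_eq_sum_of_tensorRank3 {n m p : ℕ}
    (T : ((Fin n → F) ⊗[F] (Fin m → F)) ⊗[F] (Fin p → F)) :
    ∃ (x : Fin (tensorRank3 T) → Fin n → F) (y : Fin (tensorRank3 T) → Fin m → F)
      (z : Fin (tensorRank3 T) → Fin p → F), T = ∑ i, (x i ⊗ₜ[F] y i) ⊗ₜ[F] z i :=
  Nat.sInf_mem (TensorProduct.exists_sum_tmul_tmul_eq T)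

lemma tensorRank2_sum_tmul_le {n m : ℕ} {ι : Type*} [Fintype ι] (x : ι → Fin n → F)
    (y : ι → Fin m → F) : tensorRank2 (∑ i, x i ⊗ₜ[F] y i) ≤ Fintype.card ι := by
  let e := Fintype.equivFin ι
  exact Nat.sInf_le ⟨x ∘ e.symm, y ∘ e.symm, (e.symm.sum_comp fun i ↦ x i ⊗ₜ y i).symm⟩

lemma tensorRank2_le_card_of_mem_span {n m : ℕ} {ι : Type*} (x : ι → Fin n → F)
    (y : ι → Fin m → F) {S : Finset ι} {T : (Fin n → F) ⊗[F] (Fin m → F)}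
    (hT : T ∈ Submodule.span F ((fun i ↦ x i ⊗ₜ[F] y i) '' S)) : tensorRank2 T ≤ S.card := by
  obtain ⟨c, rfl⟩ := (Submodule.mem_span_image_finset_iff_exists_fun F).mp hT
  simp_rw [smul_tmul']
  simpa using tensorRank2_sum_tmul_le (fun i : S ↦ c i • x i) (fun i ↦ y i)

lemma rankAU_le {n m : ℕ} (A : (Fin n → F) ⊗[F] (Fin m → F))
    {U : Submodule F ((Fin n → F) ⊗[F] (Fin m → F))} {u : (Fin n → F) ⊗[F] (Fin m → F)}
    (hu : u ∈ U) : rankAU A U ≤ tensorRank2 (A + u) :=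
  Nat.sInf_le ⟨u, hu, rfl⟩

lemma exists_finset_card_eq_finrank_and_linearMap_eq {V N ι : Type*}
    [AddCommGroup V] [Module F V] [FiniteDimensional F V] [AddCommGroup N] [Module F N]
    [Finite ι] {w : ι → V}
    (hw : Submodule.span F (Set.range w) = ⊤) (c : ι → N) :
    ∃ S : Finset ι, S.card = Module.finrank F V ∧ ∃ g : V →ₗ[F] N, ∀ i ∈ S, g (w i) = c i := by
  obtain ⟨b, -, -, hb_span, hb_li⟩ :=
    exists_linearIndepOn_extension (linearIndepOn_empty F w) (Set.empty_subset Set.univ)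
  lift b to Finset ι using b.toFinite
  have hspan : ⊤ ≤ Submodule.span F (Set.range fun i : b ↦ w i) := by
    rw [← hw, Submodule.span_le, ← Set.image_univ]
    simpa [Set.image_eq_range] using hb_span
  let B := Module.Basis.mk hb_li hspan
  refine ⟨b, by simp [Module.finrank_eq_card_basis B], B.constr F fun i ↦ c i, fun i hi ↦ ?_⟩
  simpa [B] using B.constr_basis F (fun i : b ↦ c i) ⟨i, hi⟩

lemma exists_finset_card_add_le_and_add_mem_span {M ι : Type*} [AddCommGroup M] [Module F M]
    [Fintype ι] {s : ℕ} {A : M} {w : Fin s → M} (hw : LinearIndependent F w) {t : ι → M} {z : ι → Fin (s + 1) → F}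
    (h : A ⊗ₜ[F] (Pi.single (Fin.last s) 1 : Fin (s + 1) → F)
        + ∑ k, w k ⊗ₜ[F] (Pi.single (Fin.castSucc k) 1 : Fin (s + 1) → F)
      = ∑ i, t i ⊗ₜ[F] z i) :
    ∃ S : Finset ι, S.card + s ≤ Fintype.card ι ∧
      ∃ u ∈ Submodule.span F (Set.range w), A + u ∈ Submodule.span F (t '' S) := by
  classical
  have slice (φ : (Fin (s + 1) → F) →ₗ[F] F) :
      φ (Pi.single (Fin.last s) 1) • A + ∑ k, φ (Pi.single (Fin.castSucc k) 1) • w k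
        = ∑ i, φ (z i) • t i := by
    simpa using congrArg ((TensorProduct.rid F M).toLinearMap ∘ₗ φ.lTensor M) h
  let p : (Fin (s + 1) → F) →ₗ[F] Fin s → F := LinearMap.funLeft F F Fin.castSucc
  have p_last : p (Pi.single (Fin.last s) 1) = 0 := by
    ext k; simp [p, LinearMap.funLeft_apply, (Fin.castSucc_lt_last k).ne]
  have p_castSucc (k : Fin s) : p (Pi.single (Fin.castSucc k) 1) = Pi.single k 1 := by
    ext l; simp [p, LinearMap.funLeft_apply, Pi.single_apply]
  have hspan : Submodule.span F (Set.range (p ∘ z)) = ⊤ := by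
    rw [← Submodule.dualAnnihilator_eq_bot_iff, Submodule.eq_bot_iff]
    intro g hg
    have hgz (i : ι) : g (p (z i)) = 0 :=
      (Submodule.mem_dualAnnihilator _).mp hg _ (Submodule.subset_span ⟨i, rfl⟩)
    have hdep : ∑ k, g (Pi.single k 1) • w k = 0 := by
      simpa [p_last, p_castSucc, hgz] using slice (g ∘ₗ p)
    refine (Pi.basisFun F (Fin s)).ext fun k ↦ ?_
    simpa using Fintype.linearIndependent_iff.mp hw _ hdep k
  obtain ⟨S, hS, g, hg⟩ :=
    exists_finset_card_eq_finrank_and_linearMap_eq hspan fun i ↦ z i (Fin.last s)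
  rw [Module.finrank_fin_fun] at hS
  let φ := LinearMap.proj (Fin.last s) - g ∘ₗ p
  have hφ : A + ∑ k, -g (Pi.single k 1) • w k = ∑ i ∈ Sᶜ, φ (z i) • t i := by
    have hφS : ∑ i ∈ S, φ (z i) • t i = 0 :=
      Finset.sum_eq_zero fun i hi ↦ by
        simp [φ, show g (p (z i)) = z i (Fin.last s) from hg i hi]
    rw [← add_zero (∑ i ∈ Sᶜ, _), ← hφS, Finset.sum_compl_add_sum]
    simpa [φ, p_last, p_castSucc, (Fin.castSucc_lt_last _).ne] using slice φ
  refine ⟨Sᶜ, ?_, ∑ k, -g (Pi.single k 1) • w k, ?_, hφ ▸ ?_⟩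
  · have := S.card_le_univ
    rw [Finset.card_compl]
    omega
  · exact Submodule.sum_mem _ fun k _ ↦ Submodule.smul_mem _ _ (Submodule.subset_span ⟨k, rfl⟩)
  · exact Submodule.sum_mem _ fun i hi ↦
      Submodule.smul_mem _ _ (Submodule.subset_span (Set.mem_image_of_mem t hi))

end

/-- if the pure tensors `u_k ⊗ v_k` are linearly independent, then
`rank(A,U) + s ≤ rank(Â)`. -/
theorem rankAU_add_le_tensorRank_hat {F : Type*} [Field F] {n m s : ℕ}
    (A : (Fin n → F) ⊗[F] (Fin m → F))
    (u : Fin s → Fin n → F) (v : Fin s → Fin m → F)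
    (hli : LinearIndependent F fun k : Fin s => u k ⊗ₜ[F] v k)
    (U : Submodule F ((Fin n → F) ⊗[F] (Fin m → F)))
    (hU : U = Submodule.span F (Set.range fun k : Fin s => u k ⊗ₜ[F] v k)) :
    rankAU A U + s ≤
      tensorRank3
        (A ⊗ₜ[F] (Pi.single (Fin.last s) 1 : Fin (s + 1) → F)
          + ∑ k : Fin s, (u k ⊗ₜ[F] v k) ⊗ₜ[F]
              (Pi.single (Fin.castSucc k) 1 : Fin (s + 1) → F)) := by
  obtain ⟨x, y, z, hdecomp⟩ := exists_eq_sum_of_tensorRank3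
    (A ⊗ₜ[F] (Pi.single (Fin.last s) 1 : Fin (s + 1) → F)
      + ∑ k : Fin s, (u k ⊗ₜ[F] v k) ⊗ₜ[F] (Pi.single (Fin.castSucc k) 1 : Fin (s + 1) → F))
  obtain ⟨S, hS, w, hwU, hAw⟩ := exists_finset_card_add_le_and_add_mem_span hli hdecomp
  calc rankAU A U + s ≤ tensorRank2 (A + w) + s := by grw [rankAU_le A (hU ▸ hwU)]
    _ ≤ S.card + s := by grw [tensorRank2_le_card_of_mem_span x y hAw]
    _ ≤ _ := by simpa using hS
end

section
/- Let F be a field, A ∈ F^n⊗F^m a tensor, and let u_1⊗v_1,…,u_s⊗v_s ∈ F^n⊗F^m be linearly independent pure tensors. Define Â = A⊗e_{s+1} + Σ_{k=1}^s u_k⊗v_k⊗e_k ∈ F^n⊗F^m⊗F^{s+1}. Suppose Â = Σ_{j=1}^l a_j⊗b_j⊗c_j is any expression of Â as a sum of l pure tensors (a_j ∈ F^n, b_j ∈ F^m, c_j ∈ F^{s+1}). Then the vectors c_1,…,c_l together with e_{s+1} span the vector space F^{s+1}; in particular l ≥ s. -/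
/-!
Moving `A ⊗ e_{s+1}` to the other side writes `∑ₖ (uₖ ⊗ vₖ) ⊗ e_k` as a sum of pure tensors whose
last factors are `e_{s+1}, c₁, …, c_l`. Contracting the last factor with a functional `φ` that kills
all of these leaves `∑ₖ φ(e_k) • uₖ ⊗ vₖ = 0`, so `φ(e_k) = 0` by linear independence. Hence every
`e_k` lies in the span of `e_{s+1}, c₁, …, c_l`, which is therefore everything, and `s + 1 ≤ l + 1`.
-/

open TensorProduct Submodule

section

variable {K M W ι κ : Type*} [Field K] [AddCommGroup M] [Module K M] [AddCommGroup W]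
  [Module K W] [Fintype ι] [Fintype κ]

theorem mem_span_range_of_sum_tmul_eq {x : ι → M} (hx : LinearIndependent K x) {w : ι → W}
    {y : κ → M} {c : κ → W} (h : ∑ i, x i ⊗ₜ[K] w i = ∑ j, y j ⊗ₜ[K] c j) (i : ι) :
    w i ∈ span K (Set.range c) := by
  rw [← Subspace.forall_mem_dualAnnihilator_apply_eq_zero_iff]
  intro φ hφ
  have hc : ∀ j, φ (c j) = 0 := fun j =>
    (mem_dualAnnihilator φ).1 hφ _ (subset_span (Set.mem_range_self j))
  have hcontract := congrArg ((TensorProduct.rid K M).toLinearMap ∘ₗ φ.lTensor M) h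
  simp only [map_sum, LinearMap.comp_apply, LinearMap.lTensor_tmul,
    LinearEquiv.coe_coe, TensorProduct.rid_tmul, hc, zero_smul, Finset.sum_const_zero] at hcontract
  exact Fintype.linearIndependent_iff.1 hx _ hcontract i

end

/-- if `Â = A ⊗ e_{s+1} + ∑ₖ uₖ ⊗ vₖ ⊗ eₖ` with the `uₖ ⊗ vₖ` linearly
independent, then in any expression of `Â` as a sum of `l` pure tensors `aⱼ ⊗ bⱼ ⊗ cⱼ`,
the vectors `c₁, …, c_l` together with `e_{s+1}` span `F^{s+1}`; in particular `l ≥ s`. -/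
theorem span_of_pure_decomposition {F : Type*} [Field F] {n m s : ℕ}
    (A : (Fin n → F) ⊗[F] (Fin m → F))
    (u : Fin s → Fin n → F) (v : Fin s → Fin m → F)
    (hli : LinearIndependent F fun k : Fin s => u k ⊗ₜ[F] v k)
    (l : ℕ) (a : Fin l → Fin n → F) (b : Fin l → Fin m → F) (c : Fin l → Fin (s + 1) → F)
    (hdec :
      A ⊗ₜ[F] (Pi.single (Fin.last s) 1 : Fin (s + 1) → F)
          + ∑ k : Fin s, (u k ⊗ₜ[F] v k) ⊗ₜ[F]
              (Pi.single (Fin.castSucc k) 1 : Fin (s + 1) → F)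
        = ∑ j : Fin l, (a j ⊗ₜ[F] b j) ⊗ₜ[F] c j) :
    Submodule.span F
        (insert (Pi.single (Fin.last s) 1 : Fin (s + 1) → F) (Set.range c)) = ⊤
      ∧ s ≤ l := by
  let c' : Fin (l + 1) → Fin (s + 1) → F := Fin.cons (Pi.single (Fin.last s) 1) c
  have hrel : ∑ k : Fin s, (u k ⊗ₜ[F] v k) ⊗ₜ[F] (Pi.single k.castSucc 1 : Fin (s + 1) → F) =
      ∑ j, (Fin.cons (-A) (fun j => a j ⊗ₜ[F] b j) : Fin (l + 1) → _) j ⊗ₜ[F] c' j := by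
    simp only [Fin.sum_univ_succ, c', Fin.cons_zero, Fin.cons_succ, neg_tmul, ← hdec]
    abel
  have hcast := mem_span_range_of_sum_tmul_eq hli hrel
  have hspan : span F (Set.range c') = ⊤ := by
    rw [eq_top_iff, ← (Pi.basisFun F (Fin (s + 1))).span_eq, span_le, Set.range_subset_iff]
    intro i
    induction i using Fin.lastCases with
    | last => exact subset_span ⟨0, by simp [c']⟩
    | cast k => simpa using hcast k
  refine ⟨Fin.range_cons _ c ▸ hspan, ?_⟩
  simpa using finrank_le_of_span_eq_top hspan
end

section
/- Let F be a field, A ∈ F^n⊗F^m a tensor, and let U ⊆ F^n⊗F^m be a subspace spanned by linearly independent pure tensors u_1⊗v_1,…,u_s⊗v_s. Define Â = A⊗e_{s+1} + Σ_{k=1}^s u_k⊗v_k⊗e_k ∈ F^n⊗F^m⊗F^{s+1}. If Â can be written as a sum of l pure tensors a_j⊗b_j⊗c_j (j = 1,…,l), then there exists a tensor B ∈ A + U with tensor rank at most l − s; moreover B can be taken of the form B = Σ_{j∈S} f(c_j) a_j⊗b_j for some subset S ⊆ {1,…,l} of size l − s and some linear functional f : F^{s+1} → F. -/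
open TensorProduct

set_option maxHeartbeats 1000000 in
set_option synthInstance.maxHeartbeats 400000 in
/-- from any expression of `Â` as a sum of `l` pure tensors one obtains a
tensor `B ∈ A + U` of rank at most `l - s`, of the form `B = ∑_{j ∈ S} f(cⱼ) aⱼ ⊗ bⱼ`
for a subset `S` of size `l - s` and a linear functional `f`. -/
theorem exists_low_rank_completion_of_decomposition {F : Type*} [Field F] {n m s : ℕ}
    (A : (Fin n → F) ⊗[F] (Fin m → F))
    (u : Fin s → Fin n → F) (v : Fin s → Fin m → F)
    (hli : LinearIndependent F fun k : Fin s => u k ⊗ₜ[F] v k)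
    (U : Submodule F ((Fin n → F) ⊗[F] (Fin m → F)))
    (hU : U = Submodule.span F (Set.range fun k : Fin s => u k ⊗ₜ[F] v k))
    (l : ℕ) (a : Fin l → Fin n → F) (b : Fin l → Fin m → F) (c : Fin l → Fin (s + 1) → F)
    (hdec :
      A ⊗ₜ[F] (Pi.single (Fin.last s) 1 : Fin (s + 1) → F)
          + ∑ k : Fin s, (u k ⊗ₜ[F] v k) ⊗ₜ[F]
              (Pi.single (Fin.castSucc k) 1 : Fin (s + 1) → F)
        = ∑ j : Fin l, (a j ⊗ₜ[F] b j) ⊗ₜ[F] c j) :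
    ∃ B : (Fin n → F) ⊗[F] (Fin m → F), B - A ∈ U ∧ tensorRank2 B ≤ l - s ∧
      ∃ (S : Finset (Fin l)) (f : (Fin (s + 1) → F) →ₗ[F] F),
        S.card = l - s ∧ B = ∑ j ∈ S, f (c j) • (a j ⊗ₜ[F] b j) := by
  classical
  set elast : Fin (s+1) → F := Pi.single (Fin.last s) 1 with helast
  -- applying a functional to the last factor
  have hPhi : ∀ f : (Fin (s + 1) → F) →ₗ[F] F,
      f elast • A + ∑ k : Fin s, f (Pi.single (Fin.castSucc k) 1) • (u k ⊗ₜ[F] v k)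
        = ∑ j : Fin l, f (c j) • (a j ⊗ₜ[F] b j) := by
    intro f
    set Ψ : ((Fin n → F) ⊗[F] (Fin m → F)) ⊗[F] (Fin (s+1) → F) →ₗ[F]
        (Fin n → F) ⊗[F] (Fin m → F) :=
      (TensorProduct.rid F ((Fin n → F) ⊗[F] (Fin m → F))).toLinearMap.comp
        (LinearMap.lTensor _ f) with hΨ
    have hpure : ∀ (x : (Fin n → F) ⊗[F] (Fin m → F)) (y : Fin (s+1) → F),
        Ψ (x ⊗ₜ[F] y) = f y • x := by
      intro x y
      simp [hΨ]
    have := congrArg Ψ hdec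
    rw [map_add, map_sum, map_sum, hpure] at this
    simpa only [hpure] using this
  -- any functional vanishing on all `c j` and on `elast` is zero
  have hzero : ∀ g : (Fin (s + 1) → F) →ₗ[F] F,
      (∀ j, g (c j) = 0) → g elast = 0 → g = 0 := by
    intro g hg hge
    have h0 : ∑ k : Fin s, g (Pi.single (Fin.castSucc k) 1) • (u k ⊗ₜ[F] v k) = 0 := by
      have := hPhi g
      rw [hge, zero_smul, zero_add] at this
      simpa [hg] using this
    have hk : ∀ k : Fin s, g (Pi.single (Fin.castSucc k) 1) = 0 := fun k =>
      linearIndependent_iff'.mp hli Finset.univ _ h0 k (Finset.mem_univ k)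
    refine (Pi.basisFun F (Fin (s+1))).ext fun i => ?_
    rw [Pi.basisFun_apply]
    induction i using Fin.lastCases with
    | last => simpa [helast] using hge
    | cast k => simpa using hk k
  -- build a set T of size s with elast not in the span of its c's
  have step : ∀ t : ℕ, t ≤ s → ∃ T : Finset (Fin l), T.card = t ∧
      elast ∉ Submodule.span F (c '' ↑T) := by
    intro t
    induction t with
    | zero =>
      intro _
      refine ⟨∅, by simp, ?_⟩
      simp only [Finset.coe_empty, Set.image_empty, Submodule.span_empty, Submodule.mem_bot]
      intro h
      have := congrFun h (Fin.last s)
      simp [helast] at this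
    | succ t ih =>
      intro ht
      obtain ⟨T, hcard, hmem⟩ := ih (le_of_lt (Nat.lt_of_lt_of_le (Nat.lt_succ_self t) ht))
      by_contra hcon
      push_neg at hcon
      have hall : ∀ j ∉ T, elast ∈ Submodule.span F (c '' ↑(insert j T : Finset (Fin l))) := by
        intro j hj
        by_contra hne
        exact hne (hcon (insert j T)
          (by rw [Finset.card_insert_of_notMem hj, hcard]))
      -- the span of elast and the c's over T is a proper subspace
      have hlt : Submodule.span F ((insert elast (T.image c) : Finset (Fin (s+1) → F)) :
          Set (Fin (s+1) → F)) < ⊤ := by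
        apply span_lt_top_of_card_lt_finrank
        rw [Finset.toFinset_coe, Module.finrank_fin_fun]
        calc (insert elast (T.image c)).card ≤ (T.image c).card + 1 :=
              Finset.card_insert_le _ _
          _ ≤ T.card + 1 := by
              exact Nat.add_le_add_right (Finset.card_image_le) 1
          _ = t + 1 := by rw [hcard]
          _ < s + 1 := Nat.succ_lt_succ (Nat.lt_of_succ_le ht)
      obtain ⟨g, hg0, hgmap⟩ := Submodule.exists_dual_map_eq_bot_of_lt_top hlt inferInstance
      have hgV : ∀ x ∈ Submodule.span F ((insert elast (T.image c) :
          Finset (Fin (s+1) → F)) : Set (Fin (s+1) → F)), g x = 0 := by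
        intro x hx
        have : g x ∈ Submodule.map g _ := Submodule.mem_map_of_mem hx
        rwa [hgmap, Submodule.mem_bot] at this
      have hge : g elast = 0 := hgV _ (Submodule.subset_span (by simp))
      have hsub : c '' ↑T ⊆ ((insert elast (T.image c) : Finset (Fin (s+1) → F)) :
          Set (Fin (s+1) → F)) := by
        intro x hx
        obtain ⟨j, hj, rfl⟩ := hx
        simp only [Finset.coe_insert, Set.mem_insert_iff, Finset.mem_coe, Finset.mem_image]
        exact Or.inr ⟨j, hj, rfl⟩
      have hgT : ∀ j ∈ T, g (c j) = 0 := fun j hj =>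
        hgV _ (Submodule.subset_span (hsub ⟨j, hj, rfl⟩))
      have hgc : ∀ j, g (c j) = 0 := by
        intro j
        by_cases hj : j ∈ T
        · exact hgT j hj
        · have h1 := hall j hj
          rw [Finset.coe_insert, Set.image_insert_eq] at h1
          obtain ⟨α, z, hz, hzz⟩ := Submodule.mem_span_insert.mp h1
          by_contra hne
          have hgz : g z = 0 := hgV _ (Submodule.span_le.mpr
            (Submodule.subset_span.trans (le_of_eq rfl)) (Submodule.span_mono hsub hz))
          have h2 : (0:F) = α * g (c j) + g z := by
            rw [← hge, hzz]; simp
          rw [hgz, add_zero] at h2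
          have h3 := mul_eq_zero.mp h2.symm
          have hα : α = 0 := by tauto
          rw [hα, zero_smul, zero_add] at hzz
          exact hmem (hzz ▸ hz)
      exact hg0 (hzero g hgc hge)
  obtain ⟨T, hTcard, hTmem⟩ := step s le_rfl
  obtain ⟨f₀, hf₀, hf₀map⟩ := Submodule.exists_dual_map_eq_bot_of_notMem hTmem inferInstance
  set f : (Fin (s + 1) → F) →ₗ[F] F := (f₀ elast)⁻¹ • f₀ with hf
  have hfe : f elast = 1 := by
    simp [hf, inv_mul_cancel₀ hf₀]
  have hfT : ∀ j ∈ T, f (c j) = 0 := by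
    intro j hj
    have : f₀ (c j) ∈ (Submodule.span F (c '' ↑T)).map f₀ :=
      Submodule.mem_map_of_mem (Submodule.subset_span ⟨j, hj, rfl⟩)
    rw [hf₀map, Submodule.mem_bot] at this
    simp [hf, this]
  set B : (Fin n → F) ⊗[F] (Fin m → F) := ∑ j ∈ Tᶜ, f (c j) • (a j ⊗ₜ[F] b j) with hB
  have hScard : Tᶜ.card = l - s := by
    rw [Finset.card_compl, hTcard, Fintype.card_fin]
  have hmain : A + ∑ k : Fin s, f (Pi.single (Fin.castSucc k) 1) • (u k ⊗ₜ[F] v k) = B := by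
    have h := hPhi f
    rw [hfe, one_smul] at h
    rw [h, hB, ← Finset.sum_add_sum_compl T fun j => f (c j) • (a j ⊗ₜ[F] b j),
      Finset.sum_eq_zero fun j hj => by rw [hfT j hj, zero_smul], zero_add]
  refine ⟨B, ?_, ?_, Tᶜ, f, hScard, rfl⟩
  · have hBA : B - A = ∑ k : Fin s, f (Pi.single (Fin.castSucc k) 1) • (u k ⊗ₜ[F] v k) := by
      rw [← hmain]; abel
    rw [hBA, hU]
    exact Submodule.sum_mem _ fun k _ => Submodule.smul_mem _ _
      (Submodule.subset_span ⟨k, rfl⟩)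
  · apply Nat.sInf_le
    refine ⟨fun i => f (c ((Tᶜ.equivFinOfCardEq hScard).symm i)) •
        a ((Tᶜ.equivFinOfCardEq hScard).symm i),
      fun i => b ((Tᶜ.equivFinOfCardEq hScard).symm i), ?_⟩
    rw [hB, ← Finset.sum_coe_sort Tᶜ fun j => f (c j) • (a j ⊗ₜ[F] b j),
      ← Equiv.sum_comp (Tᶜ.equivFinOfCardEq hScard).symm
        (fun j => f (c (j:Fin l)) • (a (j:Fin l) ⊗ₜ[F] b (j:Fin l)))]
    exact Finset.sum_congr rfl fun i _ => by rw [TensorProduct.smul_tmul']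
end
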